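/- arXiv:1812.11538 — 7 statements merged into one kernel-verified Lean document; each statement's English description precedes it below -/
import Mathlib

section
/- Let x : ℝ → ℝ³ solve the closed-loop system ẋ₁ = -x₂x₃, ẋ₂ = x₁x₃ - γ(½(x₁²+x₂²) - β)x₂, ẋ₃ = -x₂²x₃ with γ > 0, β ≥ 0. Then for all t ≥ 0, ½(x₁(t)²+x₂(t)²) = e^{-γ∫₀ᵗ x₂(s)² ds} · ½(x₁(0)²+x₂(0)²) + β(1 - e^{-γ∫₀ᵗ x₂(s)² ds}). -/
/-!
Along solutions, `H = ½(x₁² + x₂²)` obeys the scalar linear equation `H' = -γ x₂² (H - β)`, since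
the rotational terms `∓x₁x₂x₃` cancel. Hence `(H - β) · exp (γ ∫₀ᵗ x₂²)` has zero derivative and
is constant.
-/

open Real

theorem eq_exp_mul_add_of_hasDerivAt_linear {H A a : ℝ → ℝ} (β : ℝ)
    (hA : ∀ t, HasDerivAt A (a t) t) (hA0 : A 0 = 0)
    (hH : ∀ t, HasDerivAt H (-a t * (H t - β)) t) (t : ℝ) :
    H t = exp (-A t) * H 0 + β * (1 - exp (-A t)) := by
  have hG : ∀ s, HasDerivAt (fun s => (H s - β) * exp (A s)) 0 s := fun s => by
    refine (((hH s).sub_const β).mul (hA s).exp).congr_deriv ?_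
    ring
  have hconst : (H t - β) * exp (A t) = (H 0 - β) * exp (A 0) :=
    is_const_of_deriv_eq_zero (fun s => (hG s).differentiableAt) (fun s => (hG s).deriv) t 0
  rw [hA0, exp_zero, mul_one] at hconst
  rw [exp_neg]
  field_simp
  linarith

theorem hasDerivAt_half_sq_add_sq (γ β : ℝ) {x₁ x₂ x₃ : ℝ → ℝ} {t : ℝ}
    (h1 : HasDerivAt x₁ (-(x₂ t) * x₃ t) t)
    (h2 : HasDerivAt x₂ (x₁ t * x₃ t - γ * ((1/2) * ((x₁ t)^2 + (x₂ t)^2) - β) * x₂ t) t) :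
    HasDerivAt (fun s => (1/2) * ((x₁ s)^2 + (x₂ s)^2))
      (-(γ * (x₂ t)^2) * ((1/2) * ((x₁ t)^2 + (x₂ t)^2) - β)) t := by
  refine (((h1.pow 2).add (h2.pow 2)).const_mul (1/2 : ℝ)).congr_deriv ?_
  ring

theorem energy_solution_formula_general
    (γ β : ℝ) (x₁ x₂ x₃ : ℝ → ℝ)
    (h1 : ∀ t, HasDerivAt x₁ (-(x₂ t) * x₃ t) t)
    (h2 : ∀ t, HasDerivAt x₂
      (x₁ t * x₃ t - γ * ((1/2) * ((x₁ t)^2 + (x₂ t)^2) - β) * x₂ t) t) :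
    ∀ t ≥ (0:ℝ),
      (1/2) * ((x₁ t)^2 + (x₂ t)^2)
        = Real.exp (-γ * ∫ s in (0:ℝ)..t, (x₂ s)^2) * ((1/2) * ((x₁ 0)^2 + (x₂ 0)^2))
          + β * (1 - Real.exp (-γ * ∫ s in (0:ℝ)..t, (x₂ s)^2)) := by
  intro t _
  have hx₂ : Continuous fun s => (x₂ s)^2 :=
    (continuous_iff_continuousAt.mpr fun s => (h2 s).continuousAt).pow 2
  have hA : ∀ s, HasDerivAt (fun s => γ * ∫ r in (0:ℝ)..s, (x₂ r)^2) (γ * (x₂ s)^2) s :=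
    fun s => (hx₂.integral_hasStrictDerivAt 0 s).hasDerivAt.const_mul γ
  have h := eq_exp_mul_add_of_hasDerivAt_linear β hA (by simp)
    (fun s => hasDerivAt_half_sq_add_sq γ β (h1 s) (h2 s)) t
  simpa only [neg_mul] using h

/-- explicit solution formula for the partial energy
`H_ℓ(t) = ½(x₁(t)²+x₂(t)²)` of the closed-loop nonholonomic integrator. -/
theorem energy_solution_formula
    (γ β : ℝ) (hγ : 0 < γ) (hβ : 0 ≤ β) (x₁ x₂ x₃ : ℝ → ℝ)
    (h1 : ∀ t, HasDerivAt x₁ (-(x₂ t) * x₃ t) t)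
    (h2 : ∀ t, HasDerivAt x₂
      (x₁ t * x₃ t - γ * ((1/2) * ((x₁ t)^2 + (x₂ t)^2) - β) * x₂ t) t)
    (h3 : ∀ t, HasDerivAt x₃ (-(x₂ t)^2 * x₃ t) t) :
    ∀ t ≥ (0:ℝ),
      (1/2) * ((x₁ t)^2 + (x₂ t)^2)
        = Real.exp (-γ * ∫ s in (0:ℝ)..t, (x₂ s)^2) * ((1/2) * ((x₁ 0)^2 + (x₂ 0)^2))
          + β * (1 - Real.exp (-γ * ∫ s in (0:ℝ)..t, (x₂ s)^2)) :=
  energy_solution_formula_general γ β x₁ x₂ x₃ h1 h2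
end

section
/- Let x : ℝ → ℝ³ solve the closed-loop system ẋ₁ = -x₂x₃, ẋ₂ = x₁x₃ - γ(½(x₁²+x₂²) - β)x₂, ẋ₃ = -x₂²x₃ with γ > 0, β ≥ 0. If x₁(0)² + x₂(0)² > 0, then x₁(t)² + x₂(t)² > 0 for every t ≥ 0. -/
open Real intervalIntegral

/-! The partial energy `H = x₁² + x₂²` satisfies `H' = -γ x₂² H + 2γβ x₂² ≥ -γ x₂² H`, so the
integrating factor `exp (∫₀ᵗ γ x₂²)` makes `exp (∫₀ᵗ γ x₂²) · H t` nondecreasing, and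
`H t ≥ exp (-∫₀ᵗ γ x₂²) · H 0 > 0`. -/

section IntegratingFactor

variable {f f' a : ℝ → ℝ}

theorem monotone_exp_integral_mul (ha : Continuous a) (hf : ∀ t, HasDerivAt f (f' t) t)
    (hf' : ∀ t, -(a t * f t) ≤ f' t) :
    Monotone fun t => exp (∫ s in (0 : ℝ)..t, a s) * f t := by
  have hderiv : ∀ t, HasDerivAt (fun t => exp (∫ s in (0 : ℝ)..t, a s) * f t)
      (exp (∫ s in (0 : ℝ)..t, a s) * (a t * f t + f' t)) t := fun t =>
    (((ha.integral_hasStrictDerivAt 0 t).hasDerivAt.exp).mul (hf t)).congr_deriv (by ring)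
  refine monotone_of_deriv_nonneg (fun t => (hderiv t).differentiableAt) fun t => ?_
  rw [(hderiv t).deriv]
  exact mul_nonneg (exp_pos _).le (by linarith [hf' t])

theorem pos_of_forall_neg_mul_le_deriv (ha : Continuous a) (hf : ∀ t, HasDerivAt f (f' t) t)
    (hf' : ∀ t, -(a t * f t) ≤ f' t) (h0 : 0 < f 0) {t : ℝ} (ht : 0 ≤ t) : 0 < f t := by
  have hmono := monotone_exp_integral_mul ha hf hf' ht
  simp only [integral_same, exp_zero, one_mul] at hmono
  exact pos_of_mul_pos_right (h0.trans_le hmono) (exp_pos _).le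

end IntegratingFactor

theorem energy_stays_positive_general
    (γ β : ℝ) (hγ : 0 < γ) (hβ : 0 ≤ β) (x₁ x₂ x₃ : ℝ → ℝ)
    (h1 : ∀ t, HasDerivAt x₁ (-(x₂ t) * x₃ t) t)
    (h2 : ∀ t, HasDerivAt x₂
      (x₁ t * x₃ t - γ * ((1/2) * ((x₁ t)^2 + (x₂ t)^2) - β) * x₂ t) t)
    (h0 : 0 < (x₁ 0)^2 + (x₂ 0)^2) :
    ∀ t ≥ (0:ℝ), 0 < (x₁ t)^2 + (x₂ t)^2 := by
  have hH : ∀ t, HasDerivAt (fun t => (x₁ t)^2 + (x₂ t)^2)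
      (-(γ * (x₂ t)^2 * ((x₁ t)^2 + (x₂ t)^2)) + 2 * γ * β * (x₂ t)^2) t := fun t =>
    (((h1 t).pow 2).add ((h2 t).pow 2)).congr_deriv (by ring)
  have hx₂ : Continuous x₂ := continuous_iff_continuousAt.2 fun t => (h2 t).continuousAt
  intro t ht
  exact pos_of_forall_neg_mul_le_deriv (by fun_prop) hH
    (fun s => le_add_of_nonneg_right (by positivity)) h0 ht

/-- if the partial energy starts positive it stays positive. -/
theorem energy_stays_positive
    (γ β : ℝ) (hγ : 0 < γ) (hβ : 0 ≤ β) (x₁ x₂ x₃ : ℝ → ℝ)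
    (h1 : ∀ t, HasDerivAt x₁ (-(x₂ t) * x₃ t) t)
    (h2 : ∀ t, HasDerivAt x₂
      (x₁ t * x₃ t - γ * ((1/2) * ((x₁ t)^2 + (x₂ t)^2) - β) * x₂ t) t)
    (h3 : ∀ t, HasDerivAt x₃ (-(x₂ t)^2 * x₃ t) t)
    (h0 : 0 < (x₁ 0)^2 + (x₂ 0)^2) :
    ∀ t ≥ (0:ℝ), 0 < (x₁ t)^2 + (x₂ t)^2 :=
  energy_stays_positive_general γ β hγ hβ x₁ x₂ x₃ h1 h2 h0
end

section
/- Let x : ℝ → ℝ³ solve the closed-loop system ẋ₁ = -x₂x₃, ẋ₂ = x₁x₃ - γ(½(x₁²+x₂²) - β)x₂, ẋ₃ = -x₂²x₃ with γ > 0, β ≥ 0, and suppose x₃(0) ≠ 0 and ½(x₁(0)²+x₂(0)²) ≠ β. Then the following are equivalent: (i) x₃(t) → 0 as t → ∞; (ii) ½(x₁(t)²+x₂(t)²) → β as t → ∞; (iii) ∫₀^∞ x₂(s)² ds = ∞. -/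
/-!
Along the flow, `x₃` and `H - β`, where `H = ½(x₁² + x₂²)`, both solve scalar linear equations
`y' = -k x₂² y` (with `k = 1` and `k = γ`), so each equals its initial value times
`exp (-k ∫₀ᵗ x₂²)`. A nonzero multiple of that exponential tends to zero exactly when the
integral diverges.
-/

open Filter Real Topology

theorem eq_mul_exp_neg_integral_of_hasDerivAt {y g : ℝ → ℝ} {k : ℝ} (a : ℝ)
    (hg : Continuous g) (hy : ∀ t, HasDerivAt y (-(k * g t) * y t) t) (t : ℝ) :
    y t = y a * exp (-(k * ∫ s in a..t, g s)) := by
  set G : ℝ → ℝ := fun t => ∫ s in a..t, g s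
  have hG : ∀ t, HasDerivAt G (g t) t := fun t => (hg.integral_hasStrictDerivAt a t).hasDerivAt
  have hconst : ∀ t, HasDerivAt (fun t => y t * exp (k * G t)) 0 t := fun t =>
    ((hy t).mul ((hG t).const_mul k).exp).congr_deriv (by ring)
  have hval : y t * exp (k * G t) = y a := by
    simpa [G] using is_const_of_deriv_eq_zero (fun t => (hconst t).differentiableAt)
      (fun t => (hconst t).deriv) t a
  rw [← hval, mul_assoc, ← exp_add]
  simp [G]

theorem tendsto_mul_exp_neg_mul_nhds_zero_iff {α : Type*} {l : Filter α} {I : α → ℝ} {c k : ℝ}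
    (hc : c ≠ 0) (hk : 0 < k) :
    Tendsto (fun t => c * exp (-(k * I t))) l (𝓝 0) ↔ Tendsto I l atTop := by
  have hscale := tendsto_const_smul_iff₀ (f := fun t => exp (-(k * I t))) (l := l) (a := 0) hc
  simp only [smul_eq_mul, mul_zero] at hscale
  rw [hscale, tendsto_exp_comp_nhds_zero, tendsto_neg_atBot_iff,
    tendsto_const_mul_atTop_of_pos hk]

theorem convergence_equivalences_general
    (γ β : ℝ) (hγ : 0 < γ) (x₁ x₂ x₃ : ℝ → ℝ)
    (h1 : ∀ t, HasDerivAt x₁ (-(x₂ t) * x₃ t) t)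
    (h2 : ∀ t, HasDerivAt x₂
      (x₁ t * x₃ t - γ * ((1/2) * ((x₁ t)^2 + (x₂ t)^2) - β) * x₂ t) t)
    (h3 : ∀ t, HasDerivAt x₃ (-(x₂ t)^2 * x₃ t) t)
    (hx30 : x₃ 0 ≠ 0)
    (hH0 : (1/2) * ((x₁ 0)^2 + (x₂ 0)^2) ≠ β) :
    (Filter.Tendsto x₃ Filter.atTop (nhds 0)
      ↔ Filter.Tendsto (fun t => ∫ s in (0:ℝ)..t, (x₂ s)^2) Filter.atTop Filter.atTop)
    ∧ (Filter.Tendsto (fun t => (1/2) * ((x₁ t)^2 + (x₂ t)^2)) Filter.atTop (nhds β)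
      ↔ Filter.Tendsto (fun t => ∫ s in (0:ℝ)..t, (x₂ s)^2) Filter.atTop Filter.atTop) := by
  have hx₂sq : Continuous fun t => x₂ t ^ 2 :=
    (continuous_iff_continuousAt.2 fun t => (h2 t).continuousAt).pow 2
  have hHβ : ∀ t, HasDerivAt (fun t => (1/2) * ((x₁ t)^2 + (x₂ t)^2) - β)
      (-(γ * x₂ t ^ 2) * ((1/2) * ((x₁ t)^2 + (x₂ t)^2) - β)) t := fun t =>
    ((((h1 t).pow 2).add ((h2 t).pow 2)).const_mul (1/2 : ℝ) |>.sub_const β).congr_deriv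
      (by ring)
  have hx₃ := eq_mul_exp_neg_integral_of_hasDerivAt (k := 1) 0 hx₂sq (by simpa using h3)
  have hHsol := eq_mul_exp_neg_integral_of_hasDerivAt 0 hx₂sq hHβ
  constructor
  · rw [tendsto_congr hx₃]
    exact tendsto_mul_exp_neg_mul_nhds_zero_iff hx30 one_pos
  · rw [← tendsto_sub_nhds_zero_iff, tendsto_congr hHsol]
    exact tendsto_mul_exp_neg_mul_nhds_zero_iff (sub_ne_zero.2 hH0) hγ

/-- equivalence of `x₃ → 0`, `H_ℓ → β`, and `∫₀^∞ x₂² = ∞`. -/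
theorem convergence_equivalences
    (γ β : ℝ) (hγ : 0 < γ) (hβ : 0 ≤ β) (x₁ x₂ x₃ : ℝ → ℝ)
    (h1 : ∀ t, HasDerivAt x₁ (-(x₂ t) * x₃ t) t)
    (h2 : ∀ t, HasDerivAt x₂
      (x₁ t * x₃ t - γ * ((1/2) * ((x₁ t)^2 + (x₂ t)^2) - β) * x₂ t) t)
    (h3 : ∀ t, HasDerivAt x₃ (-(x₂ t)^2 * x₃ t) t)
    (hx30 : x₃ 0 ≠ 0)
    (hH0 : (1/2) * ((x₁ 0)^2 + (x₂ 0)^2) ≠ β) :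
    (Filter.Tendsto x₃ Filter.atTop (nhds 0)
      ↔ Filter.Tendsto (fun t => ∫ s in (0:ℝ)..t, (x₂ s)^2) Filter.atTop Filter.atTop)
    ∧ (Filter.Tendsto (fun t => (1/2) * ((x₁ t)^2 + (x₂ t)^2)) Filter.atTop (nhds β)
      ↔ Filter.Tendsto (fun t => ∫ s in (0:ℝ)..t, (x₂ s)^2) Filter.atTop Filter.atTop) :=
  convergence_equivalences_general γ β hγ x₁ x₂ x₃ h1 h2 h3 hx30 hH0
end

section
/- Define V(x) = ½(½(x₁²+x₂²) - β)² + ½x₃² on ℝ³. Along any solution of the closed-loop system ẋ₁ = -x₂x₃, ẋ₂ = x₁x₃ - γ(½(x₁²+x₂²) - β)x₂, ẋ₃ = -x₂²x₃ with γ > 0, β ≥ 0, one has d/dt V(x(t)) = -x₂(t)²(γ Hˢ(t)² + x₃(t)²) ≤ 0, where Hˢ = ½(x₁²+x₂²) - β. In particular t ↦ V(x(t)) is nonincreasing. -/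
/-- the Lyapunov function `V = ½(Hˢ)² + ½x₃²` satisfies
`d/dt V(x(t)) = -x₂²(γ (Hˢ)² + x₃²) ≤ 0` and is nonincreasing. -/
theorem lyapunov_decrease
    (γ β : ℝ) (hγ : 0 < γ) (hβ : 0 ≤ β) (x₁ x₂ x₃ : ℝ → ℝ)
    (h1 : ∀ t, HasDerivAt x₁ (-(x₂ t) * x₃ t) t)
    (h2 : ∀ t, HasDerivAt x₂
      (x₁ t * x₃ t - γ * ((1/2) * ((x₁ t)^2 + (x₂ t)^2) - β) * x₂ t) t)
    (h3 : ∀ t, HasDerivAt x₃ (-(x₂ t)^2 * x₃ t) t) :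
    (∀ t, HasDerivAt
        (fun t => (1/2) * ((1/2) * ((x₁ t)^2 + (x₂ t)^2) - β)^2 + (1/2) * (x₃ t)^2)
        (-(x₂ t)^2 * (γ * ((1/2) * ((x₁ t)^2 + (x₂ t)^2) - β)^2 + (x₃ t)^2)) t)
    ∧ (∀ t, -(x₂ t)^2 * (γ * ((1/2) * ((x₁ t)^2 + (x₂ t)^2) - β)^2 + (x₃ t)^2) ≤ 0)
    ∧ (∀ s t : ℝ, s ≤ t →
        (1/2) * ((1/2) * ((x₁ t)^2 + (x₂ t)^2) - β)^2 + (1/2) * (x₃ t)^2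
          ≤ (1/2) * ((1/2) * ((x₁ s)^2 + (x₂ s)^2) - β)^2 + (1/2) * (x₃ s)^2) := by
  have hV : ∀ t, HasDerivAt
      (fun t => (1/2) * ((1/2) * ((x₁ t)^2 + (x₂ t)^2) - β)^2 + (1/2) * (x₃ t)^2)
      (-(x₂ t)^2 * (γ * ((1/2) * ((x₁ t)^2 + (x₂ t)^2) - β)^2 + (x₃ t)^2)) t := by
    intro t
    have h := (((((((h1 t).pow 2).add ((h2 t).pow 2)).const_mul (1/2:ℝ)).sub_const
        β).pow 2).const_mul (1/2:ℝ)).add (((h3 t).pow 2).const_mul (1/2:ℝ))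
    refine h.congr_deriv ?_
    simp only [Pi.pow_apply, Pi.add_apply]
    ring
  have hle : ∀ t, -(x₂ t)^2 * (γ * ((1/2) * ((x₁ t)^2 + (x₂ t)^2) - β)^2 + (x₃ t)^2) ≤ 0 := by
    intro t
    have h0 : 0 ≤ (x₂ t)^2 * (γ * ((1/2) * ((x₁ t)^2 + (x₂ t)^2) - β)^2 + (x₃ t)^2) :=
      mul_nonneg (sq_nonneg _)
        (add_nonneg (mul_nonneg hγ.le (sq_nonneg _)) (sq_nonneg _))
    linarith
  refine ⟨hV, hle, ?_⟩
  intro s t hst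
  have : AntitoneOn (fun t => (1/2) * ((1/2) * ((x₁ t)^2 + (x₂ t)^2) - β)^2 + (1/2) * (x₃ t)^2)
      (Set.Icc s t) := by
    apply antitoneOn_of_hasDerivWithinAt_nonpos (convex_Icc s t)
      (fun u _ => ((hV u).continuousAt).continuousWithinAt)
      (fun u _ => ((hV u).hasDerivWithinAt))
      (fun u _ => hle u)
  exact this (Set.left_mem_Icc.2 hst) (Set.right_mem_Icc.2 hst) hst
end

section
/- For the case β = 0, γ = 1: define V(x) = ½(½(x₁²+x₂²))² + ½x₃². Along any solution of ẋ₁ = -x₂x₃, ẋ₂ = x₁x₃ - ½(x₁²+x₂²)x₂, ẋ₃ = -x₂²x₃, one has d/dt V(x(t)) = -2x₂(t)² V(x(t)), hence V(x(t)) = V(x(0)) e^{-2∫₀ᵗ x₂(s)² ds}. -/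
/-!
`H = ½(x₁² + x₂²)` and `x₃` both obey the scalar linear equation `ẏ = -x₂² y` along the
closed loop (the cross terms `∓x₁x₂x₃` in `Ḣ` cancel), so their half-squares, and hence `V`,
obey `V̇ = -2x₂² V`. A scalar linear equation `ḟ = a f` with continuous `a` is solved by
`f(t) = f(0) exp ∫₀ᵗ a`, since `f · exp(-∫₀ᵗ a)` has zero derivative.
-/

open Real

theorem eq_mul_exp_integral_of_hasDerivAt {f a : ℝ → ℝ} (ha : Continuous a)
    (hf : ∀ t, HasDerivAt f (a t * f t) t) (t : ℝ) :
    f t = f 0 * exp (∫ s in (0:ℝ)..t, a s) := by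
  set A : ℝ → ℝ := fun t => ∫ s in (0:ℝ)..t, a s
  have hA : ∀ t, HasDerivAt A (a t) t := fun t => (ha.integral_hasStrictDerivAt 0 t).hasDerivAt
  have hconst : ∀ t, HasDerivAt (fun t => f t * exp (-A t)) 0 t := fun t =>
    ((hf t).mul (hA t).neg.exp).congr_deriv (by ring)
  have key := is_const_of_deriv_eq_zero (fun s => (hconst s).differentiableAt)
    (fun s => (hconst s).deriv) t 0
  have hA0 : A 0 = 0 := intervalIntegral.integral_same
  simp only [hA0, neg_zero, exp_zero, mul_one] at key
  rw [← key, mul_assoc, ← exp_add, neg_add_cancel, exp_zero, mul_one]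

theorem HasDerivAt.half_sq_of_linear {f : ℝ → ℝ} {a t : ℝ} (hf : HasDerivAt f (a * f t) t) :
    HasDerivAt (fun t => 1/2 * f t ^ 2) (2 * a * (1/2 * f t ^ 2)) t :=
  ((hf.pow 2).const_mul (1/2)).congr_deriv (by ring)

theorem hasDerivAt_half_normSq_of_closedLoop {x₁ x₂ x₃ : ℝ → ℝ} {t : ℝ}
    (h1 : HasDerivAt x₁ (-(x₂ t) * x₃ t) t)
    (h2 : HasDerivAt x₂ (x₁ t * x₃ t - (1/2) * ((x₁ t)^2 + (x₂ t)^2) * x₂ t) t) :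
    HasDerivAt (fun t => (1/2) * ((x₁ t)^2 + (x₂ t)^2))
      (-(x₂ t)^2 * ((1/2) * ((x₁ t)^2 + (x₂ t)^2))) t :=
  (((h1.pow 2).add (h2.pow 2)).const_mul (1/2)).congr_deriv (by ring)

/-- for `β = 0, γ = 1`, `V = ½H_ℓ² + ½x₃²` satisfies
`V̇ = -2x₂² V`, hence `V(x(t)) = V(x(0)) e^{-2∫₀ᵗ x₂²}`. -/
theorem lyapunov_exponential_formula
    (x₁ x₂ x₃ : ℝ → ℝ)
    (h1 : ∀ t, HasDerivAt x₁ (-(x₂ t) * x₃ t) t)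
    (h2 : ∀ t, HasDerivAt x₂
      (x₁ t * x₃ t - (1/2) * ((x₁ t)^2 + (x₂ t)^2) * x₂ t) t)
    (h3 : ∀ t, HasDerivAt x₃ (-(x₂ t)^2 * x₃ t) t) :
    (∀ t, HasDerivAt
        (fun t => (1/2) * ((1/2) * ((x₁ t)^2 + (x₂ t)^2))^2 + (1/2) * (x₃ t)^2)
        (-2 * (x₂ t)^2 *
          ((1/2) * ((1/2) * ((x₁ t)^2 + (x₂ t)^2))^2 + (1/2) * (x₃ t)^2)) t)
    ∧ (∀ t, (1/2) * ((1/2) * ((x₁ t)^2 + (x₂ t)^2))^2 + (1/2) * (x₃ t)^2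
        = ((1/2) * ((1/2) * ((x₁ 0)^2 + (x₂ 0)^2))^2 + (1/2) * (x₃ 0)^2)
          * Real.exp (-2 * ∫ s in (0:ℝ)..t, (x₂ s)^2)) := by
  have hV : ∀ t, HasDerivAt
      (fun t => (1/2) * ((1/2) * ((x₁ t)^2 + (x₂ t)^2))^2 + (1/2) * (x₃ t)^2)
      (-2 * (x₂ t)^2 *
        ((1/2) * ((1/2) * ((x₁ t)^2 + (x₂ t)^2))^2 + (1/2) * (x₃ t)^2)) t := fun t =>
    ((hasDerivAt_half_normSq_of_closedLoop (h1 t) (h2 t)).half_sq_of_linear.add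
      (h3 t).half_sq_of_linear).congr_deriv (by ring)
  have hx₂ : Continuous x₂ := continuous_iff_continuousAt.2 fun t => (h2 t).continuousAt
  refine ⟨hV, fun t => ?_⟩
  rw [← intervalIntegral.integral_const_mul]
  exact eq_mul_exp_integral_of_hasDerivAt (continuous_const.mul (hx₂.pow 2)) hV t
end

section
/- Let x : ℝ → ℝ³ solve the closed-loop system ẋ₁ = -x₂x₃, ẋ₂ = x₁x₃ - γ(½(x₁²+x₂²) - β)x₂, ẋ₃ = -x₂²x₃ with γ > 0, β > 0, and suppose ½(x₁(0)² + x₂(0)²) > 0. Then H_ℓ(t) := ½(x₁(t)²+x₂(t)²) satisfies H_ℓ(t) ≥ min(H_ℓ(0), β) > 0 for all t ≥ 0. -/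
/-- with `β > 0`, the partial energy `H_ℓ(t)` is bounded below by
`min(H_ℓ(0), β) > 0` for all `t ≥ 0`. -/
theorem energy_lower_bound
    (γ β : ℝ) (hγ : 0 < γ) (hβ : 0 < β) (x₁ x₂ x₃ : ℝ → ℝ)
    (h1 : ∀ t, HasDerivAt x₁ (-(x₂ t) * x₃ t) t)
    (h2 : ∀ t, HasDerivAt x₂
      (x₁ t * x₃ t - γ * ((1/2) * ((x₁ t)^2 + (x₂ t)^2) - β) * x₂ t) t)
    (h3 : ∀ t, HasDerivAt x₃ (-(x₂ t)^2 * x₃ t) t)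
    (h0 : 0 < (1/2) * ((x₁ 0)^2 + (x₂ 0)^2)) :
    (∀ t ≥ (0:ℝ), min ((1/2) * ((x₁ 0)^2 + (x₂ 0)^2)) β
        ≤ (1/2) * ((x₁ t)^2 + (x₂ t)^2))
    ∧ 0 < min ((1/2) * ((x₁ 0)^2 + (x₂ 0)^2)) β := by
  set H : ℝ → ℝ := fun t => (1/2) * ((x₁ t)^2 + (x₂ t)^2) with hH
  -- derivative of H
  have hH' : ∀ t, HasDerivAt H (-(γ * (x₂ t)^2) * (H t - β)) t := by
    intro t
    have := (((h1 t).pow 2).add ((h2 t).pow 2)).const_mul (1/2 : ℝ)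
    refine this.congr_deriv ?_
    simp only [hH]
    ring
  -- x₂ continuous
  have hx₂ : Continuous x₂ := Differentiable.continuous (fun t => (h2 t).differentiableAt)
  have hc : Continuous (fun t => γ * (x₂ t)^2) := continuous_const.mul (hx₂.pow 2)
  set S : ℝ → ℝ := fun t => ∫ s in (0:ℝ)..t, γ * (x₂ s)^2 with hS
  have hS' : ∀ t, HasDerivAt S (γ * (x₂ t)^2) t := by
    intro t
    exact intervalIntegral.integral_hasDerivAt_right (hc.intervalIntegrable 0 t)
      (hc.stronglyMeasurableAtFilter _ _) hc.continuousAt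
  set F : ℝ → ℝ := fun t => (H t - β) * Real.exp (S t) with hF
  have hF' : ∀ t, HasDerivAt F 0 t := by
    intro t
    have := ((hH' t).sub_const β).mul ((hS' t).exp)
    refine this.congr_deriv ?_
    ring
  have hFc : ∀ t, F t = F 0 := by
    intro t
    have : ∀ s, deriv F s = 0 := fun s => (hF' s).deriv
    exact is_const_of_deriv_eq_zero (fun s => (hF' s).differentiableAt) this t 0
  have hS0 : S 0 = 0 := intervalIntegral.integral_same
  have hF0 : F 0 = H 0 - β := by simp [hF, hS0]
  constructor
  · intro t ht
    have hSt : 0 ≤ S t := by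
      apply intervalIntegral.integral_nonneg ht
      intro s _
      positivity
    have hE1 : Real.exp (-S t) ≤ 1 := Real.exp_le_one_iff.mpr (by linarith)
    have hEpos : 0 < Real.exp (-S t) := Real.exp_pos _
    have key : H t - β = (H 0 - β) * Real.exp (-(S t)) := by
      have h := hFc t
      rw [hF0] at h
      have hEne : Real.exp (S t) ≠ 0 := (Real.exp_pos _).ne'
      simp only [hF] at h
      rw [← h, mul_assoc, ← Real.exp_add, add_neg_cancel, Real.exp_zero]
      linarith [h]
    rcases le_or_gt β (H 0) with hcase | hcase
    · have : 0 ≤ H t - β := by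
        rw [key]; have : 0 ≤ H 0 - β := by linarith
        positivity
      have : β ≤ H t := by linarith
      exact le_trans (min_le_right _ _) this
    · have hneg : H 0 - β < 0 := by linarith
      have : (H 0 - β) * 1 ≤ (H 0 - β) * Real.exp (-(S t)) :=
        mul_le_mul_of_nonpos_left hE1 hneg.le
      have h2' : H 0 ≤ H t := by linarith [key, this]
      exact le_trans (min_le_left _ _) h2'
  · exact lt_min h0 hβ
end

section
/- Define the feedback u : ℝ³ → ℝ² by u(x) = (-x₂x₃, x₁x₃ - γ(½(x₁²+x₂²)-β)x₂) and S(x) = [[1,0],[0,1],[x₂,0]]. Then for all x ∈ ℝ³, S(x)·u(x) equals the port-Hamiltonian vector field F(x) = [[0,-x₃,0],[x₃,-γHˢ(x),0],[0,0,-x₂²]]·(x₁,x₂,x₃)ᵀ, where Hˢ(x) = ½(x₁²+x₂²)-β; i.e., the closed loop of the nonholonomic integrator under this feedback is exactly the pH system (3.6). -/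
theorem feedback_matches_pH_form_general
    (γ β : ℝ) :
    ∀ x₁ x₂ x₃ : ℝ,
      (!![1, 0; 0, 1; x₂, 0] : Matrix (Fin 3) (Fin 2) ℝ).mulVec
          ![-(x₂ * x₃), x₁ * x₃ - γ * ((1/2) * (x₁^2 + x₂^2) - β) * x₂]
        = (!![0, -x₃, 0;
              x₃, -γ * ((1/2) * (x₁^2 + x₂^2) - β), 0;
              0, 0, -x₂^2] : Matrix (Fin 3) (Fin 3) ℝ).mulVec ![x₁, x₂, x₃] := by
  intro x₁ x₂ x₃
  ext i
  fin_cases i <;>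
    simp [Matrix.mulVec, dotProduct, Fin.sum_univ_succ] <;> ring

/-- the EPD IDA-PBC feedback matches the nonholonomic integrator
to the target port-Hamiltonian vector field. -/
theorem feedback_matches_pH_form
    (γ β : ℝ) (hγ : 0 < γ) (hβ : 0 ≤ β) :
    ∀ x₁ x₂ x₃ : ℝ,
      (!![1, 0; 0, 1; x₂, 0] : Matrix (Fin 3) (Fin 2) ℝ).mulVec
          ![-(x₂ * x₃), x₁ * x₃ - γ * ((1/2) * (x₁^2 + x₂^2) - β) * x₂]
        = (!![0, -x₃, 0;
              x₃, -γ * ((1/2) * (x₁^2 + x₂^2) - β), 0;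
              0, 0, -x₂^2] : Matrix (Fin 3) (Fin 3) ℝ).mulVec ![x₁, x₂, x₃] :=
  feedback_matches_pH_form_general γ β
end
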